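/- Let θ ∈ ℂ and let u, y, z : ℂ → ℂ be holomorphic with u(t) ≠ 0 for all t. Define A(λ,t) = λ²·[[1,0],[0,−1]] + λ·[[0, u],[−2z/u, 0]] + [[z + t/2, −u·y],[−2(y·z+θ)/u, −z − t/2]] and U(λ,t) = (λ/2)·[[1,0],[0,−1]] + (1/2)·[[0, u],[−2z/u, 0]]. Then the zero-curvature equation ∂A/∂t − ∂U/∂λ + A·U − U·A = 0 holds for all (λ,t) ∈ ℂ² if and only if u′ = −y·u, y′ = y² + z + t/2, and z′ = −2y·z − θ hold for all t ∈ ℂ. -/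

import Mathlib

open Matrix Complex

noncomputable section

/-- The `λ`-coefficient matrix of the Jimbo–Miwa pair `JM₂` with parameter `θ`. -/
def A₄ (θ : ℂ) (u y z : ℂ → ℂ) (l t : ℂ) : Matrix (Fin 2) (Fin 2) ℂ :=
  l^2 • (!![1,0; 0,-1] : Matrix (Fin 2) (Fin 2) ℂ) +
    l • !![0, u t; -2*z t/u t, 0] +
    !![z t + t/2, -(u t)*(y t); -2*(y t*z t + θ)/u t, -(z t) - t/2]

/-- The `t`-coefficient matrix of the Jimbo–Miwa pair `JM₂`. -/
def U₄ (u z : ℂ → ℂ) (l t : ℂ) : Matrix (Fin 2) (Fin 2) ℂ :=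
  (l/2) • (!![1,0; 0,-1] : Matrix (Fin 2) (Fin 2) ℂ) +
    (1/2 : ℂ) • !![0, u t; -2*z t/u t, 0]

/-!
Write `e_u = u' + yu`, `e_y = y' - (y² + z + t/2)` and `e_z = z' + 2yz + θ`. A direct computation
shows that the curvature `∂ₜA - ∂_λU + [A, U]` is a matrix whose entries are linear combinations of
these three defects: its diagonal is `(e_z, -e_z)` and its upper right entry is
`(λ - y) e_u - u e_y`. So the Painlevé system makes the curvature vanish, and conversely, vanishing
for all `λ` forces `e_z = 0`, then `e_u = 0` (the coefficient of `λ`), then `e_y = 0` as `u ≠ 0`.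
-/

lemma A₄_eq (θ : ℂ) (u y z : ℂ → ℂ) (l t : ℂ) :
    A₄ θ u y z l t =
      !![l ^ 2 + z t + t / 2, l * u t - u t * y t;
        -2 * (l * z t + y t * z t + θ) / u t, -l ^ 2 - z t - t / 2] := by
  ext i j
  fin_cases i <;> fin_cases j <;> simp [A₄] <;> ring

lemma U₄_eq (u z : ℂ → ℂ) (l t : ℂ) :
    U₄ u z l t = !![l / 2, u t / 2; -z t / u t, -(l / 2)] := by
  ext i j
  fin_cases i <;> fin_cases j <;> simp [U₄] <;> ring

lemma deriv_U₄ (u z : ℂ → ℂ) (l t : ℂ) :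
    (of fun i j => deriv (fun w => U₄ u z w t i j) l) = !![1 / 2, 0; 0, -(1 / 2)] := by
  simp only [U₄_eq]
  ext i j
  fin_cases i <;> fin_cases j <;> simp

lemma deriv_A₄ {u y z : ℂ → ℂ} (θ l t : ℂ) (hu : DifferentiableAt ℂ u t)
    (hy : DifferentiableAt ℂ y t) (hz : DifferentiableAt ℂ z t) (hu0 : u t ≠ 0) :
    (of fun i j => deriv (fun s => A₄ θ u y z l s i j) t) =
      !![deriv z t + 1 / 2, l * deriv u t - (deriv u t * y t + u t * deriv y t);
        -2 * ((l * deriv z t + (deriv y t * z t + y t * deriv z t)) * u t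
          - (l * z t + y t * z t + θ) * deriv u t) / u t ^ 2,
        -deriv z t - 1 / 2] := by
  simp only [A₄_eq]
  ext i j
  fin_cases i <;> fin_cases j <;> simp (disch := first | fun_prop | assumption)
  ring

lemma zeroCurvature_A₄_U₄ {u y z : ℂ → ℂ} (θ l t : ℂ) (hu : DifferentiableAt ℂ u t)
    (hy : DifferentiableAt ℂ y t) (hz : DifferentiableAt ℂ z t) (hu0 : u t ≠ 0) :
    (of fun i j => deriv (fun s => A₄ θ u y z l s i j) t)
        - (of fun i j => deriv (fun w => U₄ u z w t i j) l)
        + A₄ θ u y z l t * U₄ u z l t - U₄ u z l t * A₄ θ u y z l t =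
      let eu := deriv u t + y t * u t
      let ey := deriv y t - (y t ^ 2 + z t + t / 2)
      let ez := deriv z t + 2 * y t * z t + θ
      !![ez, (l - y t) * eu - u t * ey;
        2 * ((l * z t + y t * z t + θ) * eu / u t - (l + y t) * ez - z t * ey) / u t, -ez] := by
  rw [deriv_A₄ θ l t hu hy hz hu0, deriv_U₄, A₄_eq, U₄_eq]
  ext i j
  fin_cases i <;> fin_cases j <;> simp <;> field_simp <;> ring

lemma eq_zero_of_forall_sub_mul_sub_mul_eq_zero {a b u y : ℂ} (hu : u ≠ 0)
    (h : ∀ l : ℂ, (l - y) * a - u * b = 0) : a = 0 ∧ b = 0 := by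
  have ha : a = 0 := by linear_combination h (y + 1) - h y
  have hb : u * b = 0 := by linear_combination -h y
  exact ⟨ha, (mul_eq_zero.mp hb).resolve_left hu⟩

/-- The zero-curvature equation for the Jimbo–Miwa pair `JM₂` holds identically in
`(λ,t)` iff `u' = −yu`, `y' = y² + z + t/2` and `z' = −2yz − θ`. -/
theorem stmt_4 (θ : ℂ) (u y z : ℂ → ℂ)
    (hu : Differentiable ℂ u) (hy : Differentiable ℂ y) (hz : Differentiable ℂ z)
    (hu0 : ∀ t : ℂ, u t ≠ 0) :
    (∀ l t : ℂ,
      (Matrix.of fun i j => deriv (fun s => A₄ θ u y z l s i j) t)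
        - (Matrix.of fun i j => deriv (fun w => U₄ u z w t i j) l)
        + A₄ θ u y z l t * U₄ u z l t - U₄ u z l t * A₄ θ u y z l t = 0)
    ↔ (∀ t : ℂ, deriv u t = -(y t) * u t ∧ deriv y t = (y t)^2 + z t + t/2 ∧
        deriv z t = -2*(y t)*(z t) - θ) := by
  simp only [fun l t => zeroCurvature_A₄_U₄ θ l t (hu t) (hy t) (hz t) (hu0 t)]
  refine ⟨fun h t => ?_, fun h l t => ?_⟩
  · have hez : deriv z t + 2 * y t * z t + θ = 0 := by simpa using congrFun₂ (h 0 t) 0 0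
    obtain ⟨heu, hey⟩ :=
      eq_zero_of_forall_sub_mul_sub_mul_eq_zero (hu0 t) fun l => congrFun₂ (h l t) 0 1
    exact ⟨by linear_combination heu, by linear_combination hey, by linear_combination hez⟩
  · obtain ⟨hu', hy', hz'⟩ := h t
    have heu : deriv u t + y t * u t = 0 := by rw [hu']; ring
    have hey : deriv y t - (y t ^ 2 + z t + t / 2) = 0 := sub_eq_zero.mpr hy'
    have hez : deriv z t + 2 * y t * z t + θ = 0 := by rw [hz']; ring
    simp only [heu, hey, hez, mul_zero, sub_zero, zero_div, neg_zero]
    exact (eta_fin_two 0).symm
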